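/- arXiv:2311.09408 — 2 statements merged into one kernel-verified Lean document; each statement's English description precedes it below -/
import Mathlib

section
/- If m > c, where m = m_u + σ_min(H)² m_y and c = σ_max(H − H_diag) σ_max(H) L_y, then there exists a unique u∞ ∈ ℝ^N such that F(u∞) = 0, i.e. ∇Φ¹(u∞) + H_diag ∇Φ²(Hu∞ + d) = 0. -/
/-!
Split `H_diag = H - (H - H_diag)`. Against `H`, strong monotonicity of `∇Φ²` makes
`u ↦ H_diag ∇Φ²(Hu + d)` coercive with constant `σ_min(H)² m_y`, while the `H - H_diag` part
costs at most `c`; so `F` is `(m - c)`-strongly monotone, and it is Lipschitz. For such a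
map `u ↦ u - γ F u` is a contraction for small `γ > 0` (Zarantonello), and its fixed point
is the zero of `F`; strong monotonicity also gives uniqueness.
-/

open RealInnerProductSpace

/-- Largest singular value of a square matrix: the operator 2-norm of `v ↦ M v`
on Euclidean space. -/
noncomputable def sigmaMax {N : ℕ} (M : Matrix (Fin N) (Fin N) ℝ) : ℝ :=
  ‖Matrix.toEuclideanCLM (𝕜 := ℝ) M‖

/-- Smallest singular value of a square matrix: the infimum of `‖M v‖` over the
unit sphere of Euclidean space. -/
noncomputable def sigmaMin {N : ℕ} (M : Matrix (Fin N) (Fin N) ℝ) : ℝ :=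
  sInf ((fun v : EuclideanSpace ℝ (Fin N) => ‖Matrix.toEuclideanCLM (𝕜 := ℝ) M v‖) '' {v | ‖v‖ = 1})

/-- Matrix-vector multiplication as a map on Euclidean space. -/
noncomputable def mulV {N : ℕ} (M : Matrix (Fin N) (Fin N) ℝ) (v : EuclideanSpace ℝ (Fin N)) :
    EuclideanSpace ℝ (Fin N) :=
  Matrix.toEuclideanCLM (𝕜 := ℝ) M v

def IsStronglyMonotone {E : Type*} [NormedAddCommGroup E] [InnerProductSpace ℝ E]
    (μ : ℝ) (F : E → E) : Prop :=
  ∀ a b, μ * ‖a - b‖ ^ 2 ≤ ⟪F a - F b, a - b⟫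

namespace IsStronglyMonotone

variable {E : Type*} [NormedAddCommGroup E] [InnerProductSpace ℝ E] {F G : E → E} {μ ν : ℝ}

lemma add (hF : IsStronglyMonotone μ F) (hG : IsStronglyMonotone ν G) :
    IsStronglyMonotone (μ + ν) (fun x => F x + G x) := fun a b => by
  have hsplit : (F a + G a) - (F b + G b) = (F a - F b) + (G a - G b) := by abel
  rw [hsplit, inner_add_left, add_mul]
  exact add_le_add (hF a b) (hG a b)

lemma injective (hμ : 0 < μ) (hF : IsStronglyMonotone μ F) : Function.Injective F := by
  intro a b h
  have hle : μ * ‖a - b‖ ^ 2 ≤ 0 := by simpa [h] using hF a b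
  have hsq : ‖a - b‖ ^ 2 = 0 :=
    le_antisymm (nonpos_of_mul_nonpos_right hle hμ) (sq_nonneg _)
  simpa [sub_eq_zero] using hsq

lemma norm_sub_smul_sub_sq_le (hF : IsStronglyMonotone μ F) {L : NNReal} (hlip : LipschitzWith L F)
    {γ : ℝ} (hγ : 0 ≤ γ) (a b : E) :
    ‖(a - γ • F a) - (b - γ • F b)‖ ^ 2 ≤ (1 - 2 * γ * μ + γ ^ 2 * L ^ 2) * ‖a - b‖ ^ 2 := by
  have hexpand : ‖(a - γ • F a) - (b - γ • F b)‖ ^ 2 =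
      ‖a - b‖ ^ 2 - 2 * γ * ⟪F a - F b, a - b⟫ + γ ^ 2 * ‖F a - F b‖ ^ 2 := by
    rw [show (a - γ • F a) - (b - γ • F b) = (a - b) - γ • (F a - F b) by
        rw [smul_sub]; abel,
      norm_sub_sq_real, real_inner_smul_right, norm_smul, real_inner_comm, mul_pow,
      Real.norm_eq_abs, sq_abs]
    ring
  have hlip_sq : ‖F a - F b‖ ^ 2 ≤ L ^ 2 * ‖a - b‖ ^ 2 := by
    rw [← mul_pow]
    exact pow_le_pow_left₀ (norm_nonneg _) (hlip.norm_sub_le a b) 2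
  rw [hexpand]
  nlinarith [mul_le_mul_of_nonneg_left (hF a b) hγ,
    mul_le_mul_of_nonneg_left hlip_sq (sq_nonneg γ)]

lemma contractingWith_sub_smul (hμ : 0 < μ) (hF : IsStronglyMonotone μ F) {L : NNReal}
    (hlip : LipschitzWith L F) (hμL : μ ≤ L) :
    ContractingWith (√(1 - (μ / L) ^ 2)).toNNReal (fun u => u - (μ / L ^ 2) • F u) := by
  have hL : (0 : ℝ) < L := hμ.trans_le hμL
  have hratio : 0 < (μ / L) ^ 2 := by positivity
  refine ⟨?_, LipschitzWith.of_dist_le' fun a b => ?_⟩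
  · rw [Real.toNNReal_lt_one, Real.sqrt_lt' one_pos]
    linarith
  · have hcoeff : 1 - 2 * (μ / L ^ 2) * μ + (μ / L ^ 2) ^ 2 * (L : ℝ) ^ 2 = 1 - (μ / L) ^ 2 := by
      field_simp; ring
    have hsq := hF.norm_sub_smul_sub_sq_le hlip (by positivity : 0 ≤ μ / L ^ 2) a b
    rw [hcoeff] at hsq
    rw [dist_eq_norm, dist_eq_norm, ← Real.sqrt_sq (norm_nonneg _),
      ← Real.sqrt_sq (norm_nonneg (a - b)), ← Real.sqrt_mul' _ (sq_nonneg _)]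
    exact Real.sqrt_le_sqrt hsq

theorem existsUnique_eq_zero [CompleteSpace E] (hμ : 0 < μ) (hF : IsStronglyMonotone μ F)
    {L : NNReal} (hlip : LipschitzWith L F) : ∃! u, F u = 0 := by
  -- enlarging the Lipschitz constant to `L' ≥ μ` keeps `1 - (μ / L')²` nonnegative
  set L' : NNReal := max L μ.toNNReal
  have hμL' : μ ≤ L' := (Real.le_coe_toNNReal μ).trans (NNReal.coe_le_coe.2 (le_max_right _ _))
  have hL' : (0 : ℝ) < L' := hμ.trans_le hμL'
  have hγ : μ / (L' : ℝ) ^ 2 ≠ 0 := (div_pos hμ (by positivity)).ne'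
  have hcontr := hF.contractingWith_sub_smul hμ (hlip.weaken (le_max_left _ _)) hμL'
  set u := ContractingWith.fixedPoint _ hcontr
  have hfix : u - (μ / (L' : ℝ) ^ 2) • F u = u := hcontr.fixedPoint_isFixedPt
  have hu : F u = 0 := (smul_eq_zero.1 (sub_eq_self.1 hfix)).resolve_left hγ
  exact ⟨u, hu, fun v hv => hF.injective hμ (hv.trans hu.symm)⟩

end IsStronglyMonotone

section Matrix

variable {N : ℕ}

lemma mulV_sub (M : Matrix (Fin N) (Fin N) ℝ) (x y : EuclideanSpace ℝ (Fin N)) :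
    mulV M (x - y) = mulV M x - mulV M y :=
  map_sub _ _ _

lemma sub_mulV (M M' : Matrix (Fin N) (Fin N) ℝ) (x : EuclideanSpace ℝ (Fin N)) :
    mulV (M - M') x = mulV M x - mulV M' x := by
  simp only [mulV, map_sub, sub_apply]

lemma sigmaMax_nonneg (M : Matrix (Fin N) (Fin N) ℝ) : 0 ≤ sigmaMax M :=
  norm_nonneg _

lemma norm_mulV_le (M : Matrix (Fin N) (Fin N) ℝ) (v : EuclideanSpace ℝ (Fin N)) :
    ‖mulV M v‖ ≤ sigmaMax M * ‖v‖ :=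
  (Matrix.toEuclideanCLM (𝕜 := ℝ) M).le_opNorm v

lemma sigmaMin_mul_norm_le (M : Matrix (Fin N) (Fin N) ℝ) (v : EuclideanSpace ℝ (Fin N)) :
    sigmaMin M * ‖v‖ ≤ ‖mulV M v‖ := by
  rcases eq_or_ne v 0 with rfl | hv
  · simp [mulV]
  have hv' : 0 < ‖v‖ := norm_pos_iff.2 hv
  have hunit : ‖‖v‖⁻¹ • v‖ = 1 := by
    rw [norm_smul, norm_inv, norm_norm, inv_mul_cancel₀ hv'.ne']
  have hle : sigmaMin M ≤ ‖mulV M (‖v‖⁻¹ • v)‖ :=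
    csInf_le ⟨0, by rintro _ ⟨w, _, rfl⟩; exact norm_nonneg _⟩ ⟨_, hunit, rfl⟩
  rw [show mulV M (‖v‖⁻¹ • v) = ‖v‖⁻¹ • mulV M v from map_smul _ _ _, norm_smul, norm_inv,
    norm_norm, le_inv_mul_iff₀ hv'] at hle
  linarith

lemma sigmaMin_nonneg (M : Matrix (Fin N) (Fin N) ℝ) : 0 ≤ sigmaMin M :=
  Real.sInf_nonneg (by rintro _ ⟨v, _, rfl⟩; exact norm_nonneg _)

lemma inner_mulV_left_of_isSymm {M : Matrix (Fin N) (Fin N) ℝ} (hM : M.IsSymm)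
    (x y : EuclideanSpace ℝ (Fin N)) : ⟪mulV M x, y⟫ = ⟪x, mulV M y⟫ := by
  have hadj : ContinuousLinearMap.adjoint (Matrix.toEuclideanCLM (𝕜 := ℝ) M) =
      Matrix.toEuclideanCLM (𝕜 := ℝ) M := by
    rw [← ContinuousLinearMap.star_eq_adjoint, ← map_star, Matrix.star_eq_conjTranspose,
      Matrix.conjTranspose_eq_transpose_of_trivial, hM.eq]
  rw [mulV, mulV, ← hadj, ContinuousLinearMap.adjoint_inner_left, hadj]

end Matrix

section Coupling

variable {N : ℕ} (H D : Matrix (Fin N) (Fin N) ℝ) (d : EuclideanSpace ℝ (Fin N))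
  {G : EuclideanSpace ℝ (Fin N) → EuclideanSpace ℝ (Fin N)} {my Ly : ℝ}

lemma norm_sub_comp_affine_le (hLy : 0 ≤ Ly) (hGlip : ∀ a b, ‖G a - G b‖ ≤ Ly * ‖a - b‖)
    (a b : EuclideanSpace ℝ (Fin N)) :
    ‖G (mulV H a + d) - G (mulV H b + d)‖ ≤ Ly * sigmaMax H * ‖a - b‖ :=
  calc ‖G (mulV H a + d) - G (mulV H b + d)‖ ≤ Ly * ‖mulV H (a - b)‖ := by
        simpa [mulV_sub] using hGlip (mulV H a + d) (mulV H b + d)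
    _ ≤ Ly * (sigmaMax H * ‖a - b‖) := mul_le_mul_of_nonneg_left (norm_mulV_le H _) hLy
    _ = Ly * sigmaMax H * ‖a - b‖ := by ring

lemma lipschitzWith_mulV_comp_affine (hLy : 0 ≤ Ly)
    (hGlip : ∀ a b, ‖G a - G b‖ ≤ Ly * ‖a - b‖) :
    LipschitzWith (sigmaMax D * (Ly * sigmaMax H)).toNNReal
      (fun u => mulV D (G (mulV H u + d))) :=
  LipschitzWith.of_dist_le' fun a b => by
    rw [dist_eq_norm, dist_eq_norm, ← mulV_sub]
    calc _ ≤ sigmaMax D * ‖G (mulV H a + d) - G (mulV H b + d)‖ := norm_mulV_le D _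
      _ ≤ sigmaMax D * (Ly * sigmaMax H * ‖a - b‖) :=
          mul_le_mul_of_nonneg_left (norm_sub_comp_affine_le H d hLy hGlip a b) (norm_nonneg _)
      _ = _ := by ring

lemma isStronglyMonotone_mulV_comp_affine (hD : D.IsSymm) (hmy : 0 ≤ my) (hLy : 0 ≤ Ly)
    (hGmono : IsStronglyMonotone my G) (hGlip : ∀ a b, ‖G a - G b‖ ≤ Ly * ‖a - b‖) :
    IsStronglyMonotone (sigmaMin H ^ 2 * my - sigmaMax (H - D) * sigmaMax H * Ly)
      (fun u => mulV D (G (mulV H u + d))) := fun a b => by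
  set g := G (mulV H a + d) - G (mulV H b + d)
  have hsplit : ⟪mulV D (G (mulV H a + d)) - mulV D (G (mulV H b + d)), a - b⟫ =
      ⟪g, mulV H (a - b)⟫ - ⟪g, mulV (H - D) (a - b)⟫ := by
    rw [← mulV_sub, inner_mulV_left_of_isSymm hD, sub_mulV, inner_sub_right]
    ring
  have hcoercive : sigmaMin H ^ 2 * my * ‖a - b‖ ^ 2 ≤ ⟪g, mulV H (a - b)⟫ :=
    calc sigmaMin H ^ 2 * my * ‖a - b‖ ^ 2 = my * (sigmaMin H * ‖a - b‖) ^ 2 := by ring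
      _ ≤ my * ‖mulV H (a - b)‖ ^ 2 := by
          gcongr
          · exact mul_nonneg (sigmaMin_nonneg H) (norm_nonneg _)
          · exact sigmaMin_mul_norm_le H _
      _ ≤ ⟪g, mulV H (a - b)⟫ := by
          simpa [mulV_sub] using hGmono (mulV H a + d) (mulV H b + d)
  have hperturb : ⟪g, mulV (H - D) (a - b)⟫ ≤ sigmaMax (H - D) * sigmaMax H * Ly * ‖a - b‖ ^ 2 :=
    calc ⟪g, mulV (H - D) (a - b)⟫ ≤ ‖g‖ * ‖mulV (H - D) (a - b)‖ := real_inner_le_norm _ _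
      _ ≤ (Ly * sigmaMax H * ‖a - b‖) * (sigmaMax (H - D) * ‖a - b‖) :=
          mul_le_mul (norm_sub_comp_affine_le H d hLy hGlip a b) (norm_mulV_le _ _)
            (norm_nonneg _) (by have := sigmaMax_nonneg H; positivity)
      _ = _ := by ring
  rw [hsplit]
  linarith

end Coupling

theorem stmt2_general {N : ℕ}
    (H : Matrix (Fin N) (Fin N) ℝ) (d : EuclideanSpace ℝ (Fin N))
    (Φ1 Φ2 : EuclideanSpace ℝ (Fin N) → ℝ)
    (mu Lu my Ly : ℝ)
    (hmy : 0 < my) (hmyLy : my ≤ Ly)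
    (hΦ1mono : ∀ a b, mu * ‖a - b‖ ^ 2 ≤ ⟪gradient Φ1 a - gradient Φ1 b, a - b⟫)
    (hΦ1lip : ∀ a b, ‖gradient Φ1 a - gradient Φ1 b‖ ≤ Lu * ‖a - b‖)
    (hΦ2mono : ∀ a b, my * ‖a - b‖ ^ 2 ≤ ⟪gradient Φ2 a - gradient Φ2 b, a - b⟫)
    (hΦ2lip : ∀ a b, ‖gradient Φ2 a - gradient Φ2 b‖ ≤ Ly * ‖a - b‖)
    (Hdiag : Matrix (Fin N) (Fin N) ℝ)
    (hHdiag : Hdiag = Matrix.diagonal (fun i => H i i))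
    (F : EuclideanSpace ℝ (Fin N) → EuclideanSpace ℝ (Fin N))
    (hF : ∀ u, F u = gradient Φ1 u + mulV Hdiag (gradient Φ2 (mulV H u + d)))
    (m c : ℝ)
    (hm : m = mu + sigmaMin H ^ 2 * my)
    (hc : c = sigmaMax (H - Hdiag) * sigmaMax H * Ly)
    (hmc : m > c) :
    ∃! uinf : EuclideanSpace ℝ (Fin N), F uinf = 0 := by
  have hLy : 0 ≤ Ly := hmy.le.trans hmyLy
  have hHdiag_symm : Hdiag.IsSymm := hHdiag ▸ Matrix.isSymm_diagonal _
  obtain rfl := funext hF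
  have hmono := IsStronglyMonotone.add hΦ1mono
    (isStronglyMonotone_mulV_comp_affine H Hdiag d hHdiag_symm hmy.le hLy hΦ2mono hΦ2lip)
  have hlip := (LipschitzWith.of_dist_le' (f := gradient Φ1) fun a b => by
      simpa only [dist_eq_norm] using hΦ1lip a b).add
    (lipschitzWith_mulV_comp_affine H Hdiag d hLy hΦ2lip)
  exact IsStronglyMonotone.existsUnique_eq_zero (by linarith) hmono hlip

/-- If `m > c`, where `m = m_u + σ_min(H)² m_y` and `c = σ_max(H − H_diag) σ_max(H) L_y`,
then the decentralized pseudo-gradient map `F(u) = ∇Φ¹(u) + H_diag ∇Φ²(H u + d)`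
has a unique zero `u∞`. -/
theorem stmt2 {N : ℕ} (hN : 0 < N)
    (H : Matrix (Fin N) (Fin N) ℝ) (d : EuclideanSpace ℝ (Fin N))
    (Φ1 Φ2 : EuclideanSpace ℝ (Fin N) → ℝ)
    (mu Lu my Ly : ℝ)
    (hmu : 0 < mu) (hmuLu : mu ≤ Lu) (hmy : 0 < my) (hmyLy : my ≤ Ly)
    (hΦ1diff : Differentiable ℝ Φ1) (hΦ2diff : Differentiable ℝ Φ2)
    (hΦ1mono : ∀ a b, mu * ‖a - b‖ ^ 2 ≤ ⟪gradient Φ1 a - gradient Φ1 b, a - b⟫)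
    (hΦ1lip : ∀ a b, ‖gradient Φ1 a - gradient Φ1 b‖ ≤ Lu * ‖a - b‖)
    (hΦ2mono : ∀ a b, my * ‖a - b‖ ^ 2 ≤ ⟪gradient Φ2 a - gradient Φ2 b, a - b⟫)
    (hΦ2lip : ∀ a b, ‖gradient Φ2 a - gradient Φ2 b‖ ≤ Ly * ‖a - b‖)
    (Hdiag : Matrix (Fin N) (Fin N) ℝ)
    (hHdiag : Hdiag = Matrix.diagonal (fun i => H i i))
    (F : EuclideanSpace ℝ (Fin N) → EuclideanSpace ℝ (Fin N))
    (hF : ∀ u, F u = gradient Φ1 u + mulV Hdiag (gradient Φ2 (mulV H u + d)))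
    (m c : ℝ)
    (hm : m = mu + sigmaMin H ^ 2 * my)
    (hc : c = sigmaMax (H - Hdiag) * sigmaMax H * Ly)
    (hmc : m > c) :
    ∃! uinf : EuclideanSpace ℝ (Fin N), F uinf = 0 :=
  stmt2_general H d Φ1 Φ2 mu Lu my Ly hmy hmyLy hΦ1mono hΦ1lip hΦ2mono hΦ2lip Hdiag hHdiag F hF m c
    hm hc hmc
end

section
/- Assume m > c, let u∞ be the unique point with F(u∞) = 0 and y∞ = Hu∞ + d. Then for every η > 0 and every ũ ∈ ℝ^N, the centralized gradient update ũ⁺ = ũ − η ∇Φ̃(ũ) satisfies ‖ũ⁺ − u∞‖² ≤ (1 − 2mη + L²η²)(1 + η) ‖ũ − u∞‖² + (η² + η) ‖(Hᵀ − H_diag) ∇Φ²(y∞)‖², where m = m_u + σ_min(H)² m_y and L = L_u + σ_max(H)² L_y. -/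
open RealInnerProductSpace

set_option maxHeartbeats 2000000

lemma aux_norm_mulV_le {N : ℕ} (M : Matrix (Fin N) (Fin N) ℝ) (v : EuclideanSpace ℝ (Fin N)) :
    ‖mulV M v‖ ≤ sigmaMax M * ‖v‖ :=
  (Matrix.toEuclideanCLM (𝕜 := ℝ) M).le_opNorm v

lemma aux_mulV_transpose {N : ℕ} (M : Matrix (Fin N) (Fin N) ℝ) :
    (Matrix.toEuclideanCLM (𝕜 := ℝ) M.transpose) =
      ContinuousLinearMap.adjoint (Matrix.toEuclideanCLM (𝕜 := ℝ) M) := by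
  rw [← ContinuousLinearMap.star_eq_adjoint, ← map_star]
  congr 1

lemma aux_inner_mulV_transpose {N : ℕ} (M : Matrix (Fin N) (Fin N) ℝ)
    (x y : EuclideanSpace ℝ (Fin N)) : ⟪mulV M.transpose x, y⟫ = ⟪x, mulV M y⟫ := by
  rw [mulV, mulV, aux_mulV_transpose]
  exact ContinuousLinearMap.adjoint_inner_left _ _ _

set_option synthInstance.maxHeartbeats 1000000 in
set_option maxHeartbeats 1000000 in
lemma aux_sigmaMax_transpose {N : ℕ} (M : Matrix (Fin N) (Fin N) ℝ) :
    sigmaMax M.transpose = sigmaMax M := by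
  rw [sigmaMax, sigmaMax, aux_mulV_transpose]
  exact LinearIsometryEquiv.norm_map ContinuousLinearMap.adjoint _

lemma aux_sigmaMin_nonneg {N : ℕ} (hN : 0 < N) (M : Matrix (Fin N) (Fin N) ℝ) :
    0 ≤ sigmaMin M := by
  apply Real.sInf_nonneg
  rintro x ⟨v, -, rfl⟩
  exact norm_nonneg _

lemma aux_sigmaMin_le {N : ℕ} (M : Matrix (Fin N) (Fin N) ℝ) (v : EuclideanSpace ℝ (Fin N)) :
    sigmaMin M * ‖v‖ ≤ ‖mulV M v‖ := by
  rcases eq_or_ne v 0 with rfl | hv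
  · simp [mulV]
  · have hnv : (0:ℝ) < ‖v‖ := norm_pos_iff.mpr hv
    have hu : ‖(‖v‖⁻¹ • v : EuclideanSpace ℝ (Fin N))‖ = 1 := by
      rw [norm_smul, norm_inv, norm_norm, inv_mul_cancel₀ hnv.ne']
    have hb : BddBelow ((fun v : EuclideanSpace ℝ (Fin N) =>
        ‖Matrix.toEuclideanCLM (𝕜 := ℝ) M v‖) '' {v | ‖v‖ = 1}) := by
      exact ⟨0, by rintro x ⟨w, -, rfl⟩; exact norm_nonneg _⟩
    have h1 : sigmaMin M ≤ ‖Matrix.toEuclideanCLM (𝕜 := ℝ) M (‖v‖⁻¹ • v)‖ :=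
      csInf_le hb ⟨_, hu, rfl⟩
    have h2 : ‖Matrix.toEuclideanCLM (𝕜 := ℝ) M (‖v‖⁻¹ • v)‖ = ‖v‖⁻¹ * ‖mulV M v‖ := by
      rw [map_smul, norm_smul, norm_inv, norm_norm]; rfl
    rw [h2] at h1
    calc sigmaMin M * ‖v‖ ≤ (‖v‖⁻¹ * ‖mulV M v‖) * ‖v‖ := by
          exact mul_le_mul_of_nonneg_right h1 hnv.le
      _ = ‖mulV M v‖ := by field_simp

lemma aux_split {N : ℕ} (η : ℝ) (hη : 0 < η) (a b : EuclideanSpace ℝ (Fin N)) :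
    ‖a - b‖ ^ 2 ≤ (1 + η) * ‖a‖ ^ 2 + (1 + η⁻¹) * ‖b‖ ^ 2 := by
  have h := norm_sub_sq_real a b
  have hip := abs_real_inner_le_norm a b
  have hinv : η * η⁻¹ = 1 := mul_inv_cancel₀ hη.ne'
  have hinvpos : 0 < η⁻¹ := inv_pos.mpr hη
  have key : -2 * ⟪a, b⟫ ≤ η * ‖a‖ ^ 2 + η⁻¹ * ‖b‖ ^ 2 := by
    have h1 : 2 * η * (‖a‖ * ‖b‖) ≤ η ^ 2 * ‖a‖ ^ 2 + ‖b‖ ^ 2 := by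
      nlinarith [sq_nonneg (η * ‖a‖ - ‖b‖)]
    have h2 : -⟪a, b⟫ ≤ ‖a‖ * ‖b‖ := by
      have := abs_le.mp hip; linarith [this.1]
    nlinarith [mul_le_mul_of_nonneg_left h1 hinvpos.le]
  nlinarith [h]


/-- one-step bound for the centralized gradient update measured against the
decentralized stationary point. With `∇Φ̃(u) = ∇Φ¹(u) + Hᵀ∇Φ²(Hu + d)`, for every `η > 0`
and `ũ`, the update `ũ⁺ = ũ − η ∇Φ̃(ũ)` satisfies
`‖ũ⁺ − u∞‖² ≤ (1 − 2mη + L²η²)(1 + η)‖ũ − u∞‖² + (η² + η)‖(Hᵀ − H_diag)∇Φ²(y∞)‖²`. -/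
theorem stmt8 {N : ℕ} (hN : 0 < N)
(H : Matrix (Fin N) (Fin N) ℝ) (d : EuclideanSpace ℝ (Fin N))
    (Φ1 Φ2 : EuclideanSpace ℝ (Fin N) → ℝ)
    (mu Lu my Ly : ℝ)
    (hmu : 0 < mu) (hmuLu : mu ≤ Lu) (hmy : 0 < my) (hmyLy : my ≤ Ly)
    (hΦ1diff : Differentiable ℝ Φ1) (hΦ2diff : Differentiable ℝ Φ2)
    (hΦ1mono : ∀ a b, mu * ‖a - b‖ ^ 2 ≤ ⟪gradient Φ1 a - gradient Φ1 b, a - b⟫)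
    (hΦ1lip : ∀ a b, ‖gradient Φ1 a - gradient Φ1 b‖ ≤ Lu * ‖a - b‖)
    (hΦ2mono : ∀ a b, my * ‖a - b‖ ^ 2 ≤ ⟪gradient Φ2 a - gradient Φ2 b, a - b⟫)
    (hΦ2lip : ∀ a b, ‖gradient Φ2 a - gradient Φ2 b‖ ≤ Ly * ‖a - b‖)
    (Hdiag : Matrix (Fin N) (Fin N) ℝ)
    (hHdiag : Hdiag = Matrix.diagonal (fun i => H i i))
    (F : EuclideanSpace ℝ (Fin N) → EuclideanSpace ℝ (Fin N))
    (hF : ∀ u, F u = gradient Φ1 u + mulV Hdiag (gradient Φ2 (mulV H u + d)))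
    (m c L : ℝ)
    (hm : m = mu + sigmaMin H ^ 2 * my)
    (hc : c = sigmaMax (H - Hdiag) * sigmaMax H * Ly)
    (hL : L = Lu + sigmaMax H ^ 2 * Ly)
    (hmc : m > c)
    (uinf yinf : EuclideanSpace ℝ (Fin N))
    (huinf : F uinf = 0)
    (hyinf : yinf = mulV H uinf + d) :
    ∀ η : ℝ, 0 < η → ∀ ut : EuclideanSpace ℝ (Fin N),
      ‖(ut - η • (gradient Φ1 ut + mulV H.transpose (gradient Φ2 (mulV H ut + d)))) - uinf‖ ^ 2 ≤
        (1 - 2 * m * η + L ^ 2 * η ^ 2) * (1 + η) * ‖ut - uinf‖ ^ 2 +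
          (η ^ 2 + η) * ‖mulV (H.transpose - Hdiag) (gradient Φ2 yinf)‖ ^ 2 := by
  intro η hη ut
  have hLu : 0 < Lu := lt_of_lt_of_le hmu hmuLu
  have hLy : 0 < Ly := lt_of_lt_of_le hmy hmyLy
  have hsmax : 0 ≤ sigmaMax H := norm_nonneg _
  have hsmin : 0 ≤ sigmaMin H := aux_sigmaMin_nonneg hN H
  have hL0 : 0 ≤ L := by rw [hL]; positivity
  set w1 := gradient Φ2 (mulV H ut + d) with hw1
  set w2 := gradient Φ2 yinf with hw2
  set e := mulV (H.transpose - Hdiag) w2 with he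
  set r := ut - uinf with hr
  set Δ := (gradient Φ1 ut - gradient Φ1 uinf) + mulV H.transpose (w1 - w2) with hΔ
  -- stationarity
  have hstat : gradient Φ1 uinf + mulV Hdiag w2 = 0 := by
    have h0 : gradient Φ1 uinf + mulV Hdiag (gradient Φ2 (mulV H uinf + d)) = 0 := by
      rw [← hF]; exact huinf
    rwa [hw2, hyinf]
  have hHd : mulV Hdiag w2 = -gradient Φ1 uinf := by
    have := eq_neg_of_add_eq_zero_right hstat
    linear_combination (norm := module) this
  have hesplit : e = mulV H.transpose w2 - mulV Hdiag w2 := by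
    simp [he, mulV, map_sub, ContinuousLinearMap.sub_apply]
  have hTsub : mulV H.transpose (w1 - w2) = mulV H.transpose w1 - mulV H.transpose w2 := by
    simp [mulV, map_sub]
  have hvec : (ut - η • (gradient Φ1 ut + mulV H.transpose w1)) - uinf
      = (r - η • Δ) - η • e := by
    rw [hesplit, hΔ, hr, hTsub, hHd]
    module
  -- mulV H r
  have hHr : mulV H r = (mulV H ut + d) - yinf := by
    rw [hyinf, hr]; simp [mulV, map_sub]
  have hHrn : sigmaMin H * ‖r‖ ≤ ‖mulV H r‖ := aux_sigmaMin_le H r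
  -- strong monotonicity
  have hΔr : m * ‖r‖ ^ 2 ≤ ⟪Δ, r⟫ := by
    have h1 : mu * ‖r‖ ^ 2 ≤ ⟪gradient Φ1 ut - gradient Φ1 uinf, r⟫ := by
      rw [hr]; exact hΦ1mono ut uinf
    have h2 : ⟪mulV H.transpose (w1 - w2), r⟫ = ⟪w1 - w2, mulV H r⟫ :=
      aux_inner_mulV_transpose H _ _
    have h3 : my * ‖mulV H r‖ ^ 2 ≤ ⟪w1 - w2, mulV H r⟫ := by
      rw [hHr]; exact hΦ2mono (mulV H ut + d) yinf
    have h4 : sigmaMin H ^ 2 * ‖r‖ ^ 2 ≤ ‖mulV H r‖ ^ 2 := by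
      nlinarith [mul_nonneg hsmin (norm_nonneg r)]
    have h5 : ⟪Δ, r⟫ = ⟪gradient Φ1 ut - gradient Φ1 uinf, r⟫
        + ⟪mulV H.transpose (w1 - w2), r⟫ := by
      rw [hΔ, inner_add_left]
    rw [h5, h2, hm]
    nlinarith [h3, h4]
  -- Lipschitz
  have hΔn : ‖Δ‖ ≤ L * ‖r‖ := by
    have h1 : ‖gradient Φ1 ut - gradient Φ1 uinf‖ ≤ Lu * ‖r‖ := by
      rw [hr]; exact hΦ1lip ut uinf
    have h2 : ‖w1 - w2‖ ≤ Ly * ‖mulV H r‖ := by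
      rw [hHr]; exact hΦ2lip (mulV H ut + d) yinf
    have h3 : ‖mulV H.transpose (w1 - w2)‖ ≤ sigmaMax H.transpose * ‖w1 - w2‖ :=
      aux_norm_mulV_le _ _
    have h4 : ‖mulV H r‖ ≤ sigmaMax H * ‖r‖ := aux_norm_mulV_le _ _
    rw [aux_sigmaMax_transpose] at h3
    have h5 : ‖Δ‖ ≤ ‖gradient Φ1 ut - gradient Φ1 uinf‖ + ‖mulV H.transpose (w1 - w2)‖ :=
      norm_add_le _ _
    rw [hL]
    have h6 : sigmaMax H * ‖w1 - w2‖ ≤ sigmaMax H * (Ly * ‖mulV H r‖) :=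
      mul_le_mul_of_nonneg_left h2 hsmax
    have h7 : sigmaMax H * Ly * ‖mulV H r‖ ≤ sigmaMax H * Ly * (sigmaMax H * ‖r‖) :=
      mul_le_mul_of_nonneg_left h4 (mul_nonneg hsmax hLy.le)
    nlinarith [h5, h6, h7]
  have hΔn2 : ‖Δ‖ ^ 2 ≤ L ^ 2 * ‖r‖ ^ 2 := by
    nlinarith [norm_nonneg Δ, mul_nonneg hL0 (norm_nonneg r)]
  -- one-step contraction
  have hstep : ‖r - η • Δ‖ ^ 2 ≤ (1 - 2 * m * η + L ^ 2 * η ^ 2) * ‖r‖ ^ 2 := by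
    rw [norm_sub_sq_real, real_inner_smul_right, norm_smul, real_inner_comm]
    have habs : ‖η‖ = η := by rw [Real.norm_eq_abs, abs_of_pos hη]
    rw [habs, mul_pow]
    nlinarith [mul_le_mul_of_nonneg_left hΔr hη.le,
      mul_le_mul_of_nonneg_left hΔn2 (sq_nonneg η)]
  -- combine
  rw [hvec]
  have hsplit := aux_split η hη (r - η • Δ) (η • e)
  have hse : ‖η • e‖ ^ 2 = η ^ 2 * ‖e‖ ^ 2 := by
    rw [norm_smul, Real.norm_eq_abs, abs_of_pos hη, mul_pow]
  rw [hse] at hsplit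
  have hcoef : (1 + η⁻¹) * (η ^ 2 * ‖e‖ ^ 2) = (η ^ 2 + η) * ‖e‖ ^ 2 := by
    field_simp
  have hfin : (1 + η) * ‖r - η • Δ‖ ^ 2 ≤
      (1 + η) * ((1 - 2 * m * η + L ^ 2 * η ^ 2) * ‖r‖ ^ 2) :=
    mul_le_mul_of_nonneg_left hstep (by linarith)
  nlinarith [hsplit, hfin, hcoef]
end
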